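/- arXiv:1204.2518 — 3 statements merged into one kernel-verified Lean document; each statement's English description precedes it below -/
import Mathlib

section
/- For any two random variables X₁, X₂ and any interactive two-party communication F (i.e., F = (F₁,...,F_r) where each odd-indexed message is a function of X₁ and the previous messages, and each even-indexed message is a function of X₂ and the previous messages), the entropy of the transcript satisfies H(F) ≥ H(F | X₁) + H(F | X₂). -/
open Finset Real

noncomputable def ent {Ω α : Type*} [Fintype Ω] [Fintype α] [DecidableEq α]
    (p : Ω → ℝ) (X : Ω → α) : ℝ :=
  - ∑ a : α, (∑ ω ∈ univ.filter (fun ω => X ω = a), p ω) *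
      Real.logb 2 (∑ ω ∈ univ.filter (fun ω => X ω = a), p ω)

noncomputable def condEnt {Ω α β : Type*} [Fintype Ω] [Fintype α] [DecidableEq α]
    [Fintype β] [DecidableEq β] (p : Ω → ℝ) (X : Ω → α) (Y : Ω → β) : ℝ :=
  ent p (fun ω => (X ω, Y ω)) - ent p Y

noncomputable def mi {Ω α β : Type*} [Fintype Ω] [Fintype α] [DecidableEq α]
    [Fintype β] [DecidableEq β] (p : Ω → ℝ) (X : Ω → α) (Y : Ω → β) : ℝ :=
  ent p X + ent p Y - ent p (fun ω => (X ω, Y ω))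

noncomputable def cmi {Ω α β γ : Type*} [Fintype Ω] [Fintype α] [DecidableEq α]
    [Fintype β] [DecidableEq β] [Fintype γ] [DecidableEq γ]
    (p : Ω → ℝ) (X : Ω → α) (Y : Ω → β) (Z : Ω → γ) : ℝ :=
  condEnt p X Z + condEnt p Y Z - condEnt p (fun ω => (X ω, Y ω)) Z

/-! By the chain rule, `H(F) = ∑ₖ H(Fₖ | F_{<k})` and `H(F | Xᵢ) = ∑ₖ H(Fₖ | F_{<k}, Xᵢ)`.
In a round where `Fₖ` is a function of `(X₁, F_{<k})`, its term in `H(F | X₁)` vanishes and its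
term in `H(F | X₂)` is at most `H(Fₖ | F_{<k})`, since conditioning does not increase entropy
(Shannon's inequality, i.e. `log x ≤ x - 1`); the rounds of the other party are symmetric. -/

open Function

lemma mul_div_self_le {x y : ℝ} (hy : 0 ≤ y) : x * (y / x) ≤ y := by
  rcases eq_or_ne x 0 with rfl | hx
  · simpa using hy
  · rw [mul_div_cancel₀ _ hx]

section Entropy

variable {Ω α β δ : Type*} [Fintype Ω] (p : Ω → ℝ)

noncomputable def law [DecidableEq α] (X : Ω → α) (a : α) : ℝ :=
  ∑ ω ∈ univ.filter (fun ω => X ω = a), p ω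

section law

variable [DecidableEq α]

lemma law_nonneg (hp : ∀ ω, 0 ≤ p ω) (X : Ω → α) (a : α) : 0 ≤ law p X a :=
  sum_nonneg fun ω _ => hp ω

lemma le_law_self (hp : ∀ ω, 0 ≤ p ω) (X : Ω → α) (ω : Ω) : p ω ≤ law p X (X ω) :=
  single_le_sum (fun ω _ => hp ω) (by simp)

lemma law_le_one (hp : ∀ ω, 0 ≤ p ω) (hp1 : ∑ ω, p ω = 1) (X : Ω → α) (a : α) :
    law p X a ≤ 1 :=
  hp1 ▸ sum_le_sum_of_subset_of_nonneg (filter_subset _ _) fun ω _ _ => hp ω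

lemma law_comp_of_injective [DecidableEq β] {e : α → β} (he : Injective e) (X : Ω → α)
    (a : α) : law p (fun ω => e (X ω)) (e a) = law p X a := by
  simp only [law, he.eq_iff]

lemma sum_law_mul [Fintype α] (X : Ω → α) (h : α → ℝ) :
    ∑ a, law p X a * h a = ∑ ω, p ω * h (X ω) := by
  simp only [law, sum_mul]
  rw [← sum_fiberwise univ X (fun ω => p ω * h (X ω))]
  exact sum_congr rfl fun a _ => sum_congr rfl fun ω hω => by rw [(mem_filter.1 hω).2]

lemma sum_law [Fintype α] (X : Ω → α) : ∑ a, law p X a = ∑ ω, p ω := by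
  simpa using sum_law_mul p X fun _ => 1

lemma sum_law_pair_left [Fintype α] [DecidableEq δ] (A : Ω → α) (C : Ω → δ) (c : δ) :
    ∑ a, law p (fun ω => (A ω, C ω)) (a, c) = law p C c := by
  simp only [law, Prod.mk.injEq]
  rw [← sum_fiberwise (univ.filter fun ω => C ω = c) A p]
  simp only [filter_filter, and_comm]

end law

lemma ent_eq_sum_log_law [Fintype α] [DecidableEq α] (X : Ω → α) :
    ent p X = -(∑ ω, p ω * log (law p X (X ω))) / log 2 := by
  have h : ent p X = -∑ a, law p X a * logb 2 (law p X a) := rfl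
  rw [h, sum_law_mul p X fun a => logb 2 (law p X a)]
  simp only [logb, mul_div_assoc', ← sum_div, neg_div]

lemma ent_comp_of_injective [Fintype α] [DecidableEq α] [Fintype β] [DecidableEq β]
    {e : α → β} (he : Injective e) (X : Ω → α) :
    ent p (fun ω => e (X ω)) = ent p X := by
  simp only [ent_eq_sum_log_law, law_comp_of_injective p he]

lemma ent_nonneg (hp : ∀ ω, 0 ≤ p ω) (hp1 : ∑ ω, p ω = 1) [Fintype α] [DecidableEq α]
    (X : Ω → α) : 0 ≤ ent p X := by
  rw [ent_eq_sum_log_law, neg_div, neg_nonneg]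
  refine div_nonpos_of_nonpos_of_nonneg (sum_nonpos fun ω _ => ?_) (log_nonneg one_le_two)
  exact mul_nonpos_of_nonneg_of_nonpos (hp ω)
    (log_nonpos (law_nonneg p hp X _) (law_le_one p hp hp1 X _))

section Shannon

variable [Fintype α] [DecidableEq α] [Fintype β] [DecidableEq β] [Fintype δ] [DecidableEq δ]

lemma sum_law_pair_mul_law_pair_div_law_le (hp : ∀ ω, 0 ≤ p ω) (A : Ω → α) (B : Ω → β)
    (C : Ω → δ) :
    ∑ v : α × δ × β, law p (fun ω => (A ω, C ω)) (v.1, v.2.1) *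
      law p (fun ω => (C ω, B ω)) v.2 / law p C v.2.1 ≤ ∑ ω, p ω := by
  calc _ = ∑ u : δ × β, law p C u.1 * (law p (fun ω => (C ω, B ω)) u / law p C u.1) := by
        rw [Fintype.sum_prod_type, sum_comm]
        refine sum_congr rfl fun u _ => ?_
        simp only [mul_div_assoc, ← sum_mul, sum_law_pair_left]
    _ ≤ ∑ u : δ × β, law p (fun ω => (C ω, B ω)) u :=
        sum_le_sum fun u _ => mul_div_self_le (law_nonneg p hp _ u)
    _ = ∑ ω, p ω := sum_law p _

lemma ent_triple_add_ent_le (hp : ∀ ω, 0 ≤ p ω) (A : Ω → α) (B : Ω → β) (C : Ω → δ) :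
    ent p (fun ω => (A ω, (C ω, B ω))) + ent p C ≤
      ent p (fun ω => (A ω, C ω)) + ent p (fun ω => (C ω, B ω)) := by
  set Z : Ω → α × δ × β := fun ω => (A ω, (C ω, B ω))
  set g : α × δ × β → ℝ := fun v => law p (fun ω => (A ω, C ω)) (v.1, v.2.1) *
      law p (fun ω => (C ω, B ω)) v.2 / law p C v.2.1
  -- `log x ≤ x - 1` at `x = P(a,c) P(c,b) / (P(a,c,b) P(c))`, weighted by `p ω`
  have pointwise : ∀ ω, p ω * (log (law p (fun ω => (A ω, C ω)) (A ω, C ω)) +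
      log (law p (fun ω => (C ω, B ω)) (C ω, B ω)) - log (law p Z (Z ω)) - log (law p C (C ω)))
      ≤ p ω * (g (Z ω) / law p Z (Z ω)) - p ω := by
    intro ω
    rcases (hp ω).eq_or_lt with h0 | hpos
    · simp [← h0]
    have hAC := hpos.trans_le (le_law_self p hp (fun ω => (A ω, C ω)) ω)
    have hCB := hpos.trans_le (le_law_self p hp (fun ω => (C ω, B ω)) ω)
    have hZ := hpos.trans_le (le_law_self p hp Z ω)
    have hC := hpos.trans_le (le_law_self p hp C ω)
    have hlog : log (law p (fun ω => (A ω, C ω)) (A ω, C ω)) +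
        log (law p (fun ω => (C ω, B ω)) (C ω, B ω)) - log (law p Z (Z ω)) -
        log (law p C (C ω)) = log (g (Z ω) / law p Z (Z ω)) := by
      simp only [g, Z]
      rw [log_div (by positivity) hZ.ne', log_div (by positivity) hC.ne',
        log_mul hAC.ne' hCB.ne']
      ring
    rw [hlog, ← mul_sub_one]
    exact mul_le_mul_of_nonneg_left (log_le_sub_one_of_pos (by positivity)) hpos.le
  have hmass : ∑ ω, p ω * (g (Z ω) / law p Z (Z ω)) ≤ ∑ ω, p ω :=
    calc _ = ∑ v, law p Z v * (g v / law p Z v) := (sum_law_mul p Z _).symm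
      _ ≤ ∑ v, g v := sum_le_sum fun v _ => mul_div_self_le
          (div_nonneg (mul_nonneg (law_nonneg p hp _ _) (law_nonneg p hp _ _))
            (law_nonneg p hp _ _))
      _ ≤ ∑ ω, p ω := sum_law_pair_mul_law_pair_div_law_le p hp A B C
  have hsum := sum_le_sum fun ω (_ : ω ∈ univ) => pointwise ω
  simp only [mul_add, mul_sub, sum_add_distrib, sum_sub_distrib] at hsum
  simp only [ent_eq_sum_log_law]
  rw [← add_div, ← add_div, div_le_div_iff_of_pos_right (log_pos one_lt_two)]
  linarith

end Shannon

section condEnt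

variable [Fintype α] [DecidableEq α] [Fintype β] [DecidableEq β] [Fintype δ] [DecidableEq δ]

lemma condEnt_pair_le (hp : ∀ ω, 0 ≤ p ω) (A : Ω → α) (B : Ω → β) (C : Ω → δ) :
    condEnt p A (fun ω => (C ω, B ω)) ≤ condEnt p A C := by
  have := ent_triple_add_ent_le p hp A B C
  simp only [condEnt]
  linarith

lemma condEnt_eq_zero_of_eq_comp (X : Ω → α) (Y : Ω → β) (f : β → α)
    (h : ∀ ω, X ω = f (Y ω)) : condEnt p X Y = 0 := by
  have hgraph : (fun ω => (X ω, Y ω)) = fun ω => (fun y => (f y, y)) (Y ω) :=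
    funext fun ω => by rw [h]
  rw [condEnt, hgraph]
  exact sub_eq_zero.2 <| ent_comp_of_injective p (e := fun y => (f y, y))
    (fun _ _ hxy => congrArg Prod.snd hxy) Y

lemma condEnt_eq_zero_of_unique [Unique α] (X : Ω → α) (Y : Ω → β) : condEnt p X Y = 0 :=
  condEnt_eq_zero_of_eq_comp p X Y (fun _ => default) fun _ => Subsingleton.elim _ _

lemma condEnt_comp_of_injective {e : α → β} (he : Injective e) (X : Ω → α) (Y : Ω → δ) :
    condEnt p (fun ω => e (X ω)) Y = condEnt p X Y := by
  rw [condEnt, condEnt, ← ent_comp_of_injective p (he.prodMap injective_id) fun ω => (X ω, Y ω)]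
  rfl

lemma condEnt_pair (A : Ω → α) (B : Ω → β) (C : Ω → δ) :
    condEnt p (fun ω => (A ω, B ω)) C = condEnt p B C + condEnt p A fun ω => (B ω, C ω) := by
  have := ent_comp_of_injective p (Equiv.prodAssoc α β δ).symm.injective
    fun ω => (A ω, (B ω, C ω))
  simp only [Equiv.prodAssoc_symm_apply] at this
  simp only [condEnt, this]
  ring

lemma condEnt_pair_add_condEnt_pair_le_of_eq_comp (hp : ∀ ω, 0 ≤ p ω) (M : Ω → α) (T : Ω → β)
    (X : Ω → δ) {ε : Type*} [Fintype ε] [DecidableEq ε] (Y : Ω → ε) (f : β × δ → α)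
    (hM : ∀ ω, M ω = f (T ω, X ω)) :
    condEnt p M (fun ω => (T ω, X ω)) + condEnt p M (fun ω => (T ω, Y ω)) ≤
      condEnt p M T := by
  rw [condEnt_eq_zero_of_eq_comp p M _ f hM, zero_add]
  exact condEnt_pair_le p hp M Y T

end condEnt

end Entropy

/-- For any interactive two-party communication `F = (F₁,…,F_r)` (odd-indexed
messages functions of `X₁` and past messages, even-indexed of `X₂` and past
messages), `H(F) ≥ H(F|X₁) + H(F|X₂)`. -/
theorem interactive_comm_entropy_bound
    {Ω 𝒳₁ 𝒳₂ γ : Type*} [Fintype Ω] [Fintype 𝒳₁] [DecidableEq 𝒳₁]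
    [Fintype 𝒳₂] [DecidableEq 𝒳₂] [Fintype γ] [DecidableEq γ]
    (p : Ω → ℝ) (hp : ∀ ω, 0 ≤ p ω) (hp1 : ∑ ω, p ω = 1)
    (X₁ : Ω → 𝒳₁) (X₂ : Ω → 𝒳₂) (r : ℕ) (F : Fin r → Ω → γ)
    (hodd : ∀ k : Fin r, k.val % 2 = 0 →
      ∃ g : 𝒳₁ → (Fin k.val → γ) → γ,
        ∀ ω, F k ω = g (X₁ ω) (fun j => F ⟨j.1, j.2.trans k.2⟩ ω))
    (heven : ∀ k : Fin r, k.val % 2 = 1 →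
      ∃ g : 𝒳₂ → (Fin k.val → γ) → γ,
        ∀ ω, F k ω = g (X₂ ω) (fun j => F ⟨j.1, j.2.trans k.2⟩ ω)) :
    ent p (fun ω (k : Fin r) => F k ω) ≥
      condEnt p (fun ω (k : Fin r) => F k ω) X₁ +
      condEnt p (fun ω (k : Fin r) => F k ω) X₂ := by
  induction r with
  | zero =>
    rw [condEnt_eq_zero_of_unique, condEnt_eq_zero_of_unique, add_zero]
    exact ent_nonneg p hp hp1 _
  | succ r ih =>
    let T : Ω → Fin r → γ := fun ω k => F k.castSucc ω
    let M : Ω → γ := F (Fin.last r)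
    have hprefix := ih (fun k => F k.castSucc) (fun k => hodd k.castSucc)
      (fun k => heven k.castSucc)
    have hround : condEnt p M (fun ω => (T ω, X₁ ω)) + condEnt p M (fun ω => (T ω, X₂ ω)) ≤
        condEnt p M T := by
      rcases Nat.mod_two_eq_zero_or_one r with hr | hr
      · obtain ⟨g, hg⟩ := hodd (Fin.last r) hr
        exact condEnt_pair_add_condEnt_pair_le_of_eq_comp p hp M T X₁ X₂ (fun q => g q.2 q.1) hg
      · obtain ⟨g, hg⟩ := heven (Fin.last r) hr
        rw [add_comm]
        exact condEnt_pair_add_condEnt_pair_le_of_eq_comp p hp M T X₂ X₁ (fun q => g q.2 q.1) hg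
    have hsnoc : (fun ω (k : Fin (r + 1)) => F k ω) = fun ω => Fin.snocEquiv _ (M ω, T ω) :=
      funext fun ω => (Fin.snoc_init_self _).symm
    have hent : ent p (fun ω => (M ω, T ω)) = ent p T + condEnt p M T := by
      rw [condEnt]; ring
    rw [hsnoc, ent_comp_of_injective p (Fin.snocEquiv _).injective, hent,
      condEnt_comp_of_injective p (Fin.snocEquiv _).injective,
      condEnt_comp_of_injective p (Fin.snocEquiv _).injective, condEnt_pair, condEnt_pair]
    linarith
end

section
/- Let X₁, X₂ be random variables, F an interactive communication (so that H(F) ≥ H(F|X₁) + H(F|X₂)), G₀ = g₀(X₁,X₂) and G₂ = g₂(G₀) deterministic functions. Then H(F) + H(G₂ | X₂, F) + H(X₂ | X₁, F) + H(X₁ | X₂, G₀, F) ≥ H(G₂ | X₂) + H(X₂ | X₁) + H(X₁ | X₂, G₀). -/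
open Finset Real

namespace RateAux
set_option linter.unusedSectionVars false


variable {Ω α β γ δ : Type*} [Fintype Ω] [Fintype α] [DecidableEq α]
  [Fintype β] [DecidableEq β] [Fintype γ] [DecidableEq γ] [Fintype δ] [DecidableEq δ]

noncomputable def dst (p : Ω → ℝ) (X : Ω → α) (a : α) : ℝ :=
  ∑ ω ∈ univ.filter (fun ω => X ω = a), p ω

lemma ent_eq (p : Ω → ℝ) (X : Ω → α) :
    ent p X = - ∑ a, dst p X a * Real.logb 2 (dst p X a) := rfl

lemma dst_nonneg (p : Ω → ℝ) (hp : ∀ ω, 0 ≤ p ω) (X : Ω → α) (a : α) : 0 ≤ dst p X a :=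
  Finset.sum_nonneg fun ω _ => hp ω

lemma sum_dst (p : Ω → ℝ) (X : Ω → α) : ∑ a, dst p X a = ∑ ω, p ω :=
  Finset.sum_fiberwise univ X p

lemma dst_comp_sum (p : Ω → ℝ) (X : Ω → α) (u : α → β) (b : β) :
    ∑ a ∈ univ.filter (fun a => u a = b), dst p X a = dst p (fun ω => u (X ω)) b := by
  unfold dst
  rw [← Finset.sum_fiberwise_of_maps_to (s := univ.filter (fun ω => u (X ω) = b))
      (t := univ.filter (fun a => u a = b)) (g := X) ?_ p]
  · apply Finset.sum_congr rfl
    intro a ha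
    apply Finset.sum_congr ?_ (fun _ _ => rfl)
    simp only [mem_filter, mem_univ, true_and] at ha
    ext ω
    simp only [mem_filter, mem_univ, true_and]
    constructor
    · intro h; exact ⟨h ▸ ha, h⟩
    · rintro ⟨_, h⟩; exact h
  · intro ω hω
    simp only [mem_filter, mem_univ, true_and] at hω ⊢
    exact hω

lemma sum_dst_comp (p : Ω → ℝ) (X : Ω → α) (u : α → β) (F : β → ℝ) :
    ∑ a, dst p X a * F (u a) = ∑ b, dst p (fun ω => u (X ω)) b * F b := by
  rw [← Finset.sum_fiberwise univ u (fun a => dst p X a * F (u a))]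
  apply Finset.sum_congr rfl
  intro b _
  calc ∑ a ∈ univ.filter (fun a => u a = b), dst p X a * F (u a)
      = ∑ a ∈ univ.filter (fun a => u a = b), dst p X a * F b := by
        apply Finset.sum_congr rfl
        intro a ha
        simp only [mem_filter, mem_univ, true_and] at ha
        rw [ha]
    _ = (∑ a ∈ univ.filter (fun a => u a = b), dst p X a) * F b := by
        rw [Finset.sum_mul]
    _ = dst p (fun ω => u (X ω)) b * F b := by rw [dst_comp_sum]

lemma ent_comp (p : Ω → ℝ) (X : Ω → α) (u : α → β) :
    ent p (fun ω => u (X ω)) =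
      - ∑ a, dst p X a * Real.logb 2 (dst p (fun ω => u (X ω)) (u a)) := by
  rw [ent_eq, sum_dst_comp p X u (fun b => Real.logb 2 (dst p (fun ω => u (X ω)) b))]

lemma dst_comp_of_inj (p : Ω → ℝ) (X : Ω → α) {u : α → β} (hu : Function.Injective u) (a : α) :
    dst p (fun ω => u (X ω)) (u a) = dst p X a := by
  unfold dst
  apply Finset.sum_congr ?_ (fun _ _ => rfl)
  ext ω
  simp [hu.eq_iff]

lemma ent_comp_inj (p : Ω → ℝ) (X : Ω → α) {u : α → β} (hu : Function.Injective u) :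
    ent p (fun ω => u (X ω)) = ent p X := by
  rw [ent_comp, ent_eq]
  congr 1
  exact Finset.sum_congr rfl fun a _ => by rw [dst_comp_of_inj p X hu]

lemma ent_eq_of_inj (p : Ω → ℝ) (V : Ω → δ) (Y : Ω → α) (Z : Ω → β)
    (e₁ : δ → α) (e₂ : δ → β) (h₁ : Function.Injective e₁) (h₂ : Function.Injective e₂)
    (hY : ∀ ω, Y ω = e₁ (V ω)) (hZ : ∀ ω, Z ω = e₂ (V ω)) :
    ent p Y = ent p Z := by
  rw [show Y = fun ω => e₁ (V ω) from funext hY, show Z = fun ω => e₂ (V ω) from funext hZ,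
    ent_comp_inj p V h₁, ent_comp_inj p V h₂]

lemma dst_le_dst_comp (p : Ω → ℝ) (hp : ∀ ω, 0 ≤ p ω) (X : Ω → α) (u : α → β) (a : α) :
    dst p X a ≤ dst p (fun ω => u (X ω)) (u a) := by
  apply Finset.sum_le_sum_of_subset_of_nonneg
  · intro ω hω
    simp only [mem_filter, mem_univ, true_and] at hω ⊢
    rw [hω]
  · intro ω _ _
    exact hp ω

lemma dst_fst_marg (p : Ω → ℝ) (X : Ω → α) (Z : Ω → γ) (z : γ) :
    ∑ x, dst p (fun ω => (X ω, Z ω)) (x, z) = dst p Z z := by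
  unfold dst
  rw [← Finset.sum_fiberwise_of_maps_to (s := univ.filter (fun ω => Z ω = z))
      (t := (univ : Finset α)) (g := X) (fun _ _ => mem_univ _) p]
  apply Finset.sum_congr rfl
  intro x _
  apply Finset.sum_congr ?_ (fun _ _ => rfl)
  ext ω
  simp [Prod.ext_iff, and_comm]

lemma submod (p : Ω → ℝ) (hp : ∀ ω, 0 ≤ p ω)
    (X : Ω → α) (Y : Ω → β) (Z : Ω → γ) :
    ent p (fun ω => ((X ω, Y ω), Z ω)) + ent p Z ≤
      ent p (fun ω => (X ω, Z ω)) + ent p (fun ω => (Y ω, Z ω)) := by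
  classical
  have hlog2 : (0:ℝ) < Real.log 2 := Real.log_pos (by norm_num)
  have hrq1 : ∀ w : (α × β) × γ, dst p (fun ω => ((X ω, Y ω), Z ω)) w ≤
      dst p (fun ω => (X ω, Z ω)) (w.1.1, w.2) := fun w =>
    dst_le_dst_comp p hp (fun ω => ((X ω, Y ω), Z ω)) (fun w => (w.1.1, w.2)) w
  have hrq2 : ∀ w : (α × β) × γ, dst p (fun ω => ((X ω, Y ω), Z ω)) w ≤
      dst p (fun ω => (Y ω, Z ω)) (w.1.2, w.2) := fun w =>
    dst_le_dst_comp p hp (fun ω => ((X ω, Y ω), Z ω)) (fun w => (w.1.2, w.2)) w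
  have hrq3 : ∀ w : (α × β) × γ, dst p (fun ω => ((X ω, Y ω), Z ω)) w ≤ dst p Z w.2 :=
    fun w => dst_le_dst_comp p hp (fun ω => ((X ω, Y ω), Z ω)) (fun w => w.2) w
  set d : (α × β) × γ → ℝ := fun w =>
    if 0 < dst p (fun ω => ((X ω, Y ω), Z ω)) w then
      dst p (fun ω => (X ω, Z ω)) (w.1.1, w.2) * dst p (fun ω => (Y ω, Z ω)) (w.1.2, w.2)
        / dst p Z w.2
    else 0 with hd
  have hpoint : ∀ w : (α × β) × γ,
      dst p (fun ω => ((X ω, Y ω), Z ω)) w *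
        (Real.logb 2 (dst p (fun ω => (X ω, Z ω)) (w.1.1, w.2)) +
         Real.logb 2 (dst p (fun ω => (Y ω, Z ω)) (w.1.2, w.2)) -
         Real.logb 2 (dst p (fun ω => ((X ω, Y ω), Z ω)) w) -
         Real.logb 2 (dst p Z w.2)) ≤
      (d w - dst p (fun ω => ((X ω, Y ω), Z ω)) w) / Real.log 2 := by
    intro w
    rcases eq_or_lt_of_le (dst_nonneg p hp (fun ω => ((X ω, Y ω), Z ω)) w) with h0 | h0
    · rw [← h0]
      simp [hd, ← h0]
    · have hq1 := hrq1 w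
      have hq2 := hrq2 w
      have hq3 := hrq3 w
      have p1 : (0:ℝ) < dst p (fun ω => (X ω, Z ω)) (w.1.1, w.2) := lt_of_lt_of_le h0 hq1
      have p2 : (0:ℝ) < dst p (fun ω => (Y ω, Z ω)) (w.1.2, w.2) := lt_of_lt_of_le h0 hq2
      have p3 : (0:ℝ) < dst p Z w.2 := lt_of_lt_of_le h0 hq3
      simp only [hd, if_pos h0]
      rw [Real.logb, Real.logb, Real.logb, Real.logb,
        ← add_div, ← sub_div, ← sub_div, ← mul_div_assoc]
      gcongr
      have hlog : Real.log (dst p (fun ω => (X ω, Z ω)) (w.1.1, w.2)) +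
          Real.log (dst p (fun ω => (Y ω, Z ω)) (w.1.2, w.2)) -
          Real.log (dst p (fun ω => ((X ω, Y ω), Z ω)) w) - Real.log (dst p Z w.2)
          = Real.log ((dst p (fun ω => (X ω, Z ω)) (w.1.1, w.2) *
              dst p (fun ω => (Y ω, Z ω)) (w.1.2, w.2)) /
              (dst p (fun ω => ((X ω, Y ω), Z ω)) w * dst p Z w.2)) := by
        rw [Real.log_div (by positivity) (by positivity),
          Real.log_mul (ne_of_gt p1) (ne_of_gt p2),
          Real.log_mul (ne_of_gt h0) (ne_of_gt p3)]
        ring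
      rw [hlog]
      have hls := Real.log_le_sub_one_of_pos
        (x := (dst p (fun ω => (X ω, Z ω)) (w.1.1, w.2) *
              dst p (fun ω => (Y ω, Z ω)) (w.1.2, w.2)) /
              (dst p (fun ω => ((X ω, Y ω), Z ω)) w * dst p Z w.2)) (by positivity)
      calc dst p (fun ω => ((X ω, Y ω), Z ω)) w * Real.log _
          ≤ dst p (fun ω => ((X ω, Y ω), Z ω)) w *
            ((dst p (fun ω => (X ω, Z ω)) (w.1.1, w.2) *
              dst p (fun ω => (Y ω, Z ω)) (w.1.2, w.2)) /
              (dst p (fun ω => ((X ω, Y ω), Z ω)) w * dst p Z w.2) - 1) :=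
            mul_le_mul_of_nonneg_left hls (le_of_lt h0)
        _ = dst p (fun ω => (X ω, Z ω)) (w.1.1, w.2) *
              dst p (fun ω => (Y ω, Z ω)) (w.1.2, w.2) / dst p Z w.2 -
              dst p (fun ω => ((X ω, Y ω), Z ω)) w := by
            field_simp
  have hsum_d : ∑ w : (α × β) × γ, d w ≤ ∑ z : γ, dst p Z z := by
    have step1 : ∑ w : (α × β) × γ, d w ≤ ∑ w : (α × β) × γ,
        (if 0 < dst p Z w.2 then
          dst p (fun ω => (X ω, Z ω)) (w.1.1, w.2) * dst p (fun ω => (Y ω, Z ω)) (w.1.2, w.2)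
            / dst p Z w.2 else 0) := by
      apply Finset.sum_le_sum
      intro w _
      simp only [hd]
      by_cases h : 0 < dst p (fun ω => ((X ω, Y ω), Z ω)) w
      · rw [if_pos h, if_pos (lt_of_lt_of_le h (hrq3 w))]
      · rw [if_neg h]
        by_cases h' : 0 < dst p Z w.2
        · rw [if_pos h']
          have := dst_nonneg p hp (fun ω => (X ω, Z ω)) (w.1.1, w.2)
          have := dst_nonneg p hp (fun ω => (Y ω, Z ω)) (w.1.2, w.2)
          positivity
        · rw [if_neg h']
    have step2 : ∑ w : (α × β) × γ,
        (if 0 < dst p Z w.2 then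
          dst p (fun ω => (X ω, Z ω)) (w.1.1, w.2) * dst p (fun ω => (Y ω, Z ω)) (w.1.2, w.2)
            / dst p Z w.2 else 0)
        = ∑ z : γ, (if 0 < dst p Z z then dst p Z z else 0) := by
      rw [Fintype.sum_prod_type, Finset.sum_comm]
      apply Finset.sum_congr rfl
      intro z _
      by_cases h : 0 < dst p Z z
      · simp only [if_pos h]
        rw [Fintype.sum_prod_type]
        have inner : ∀ x : α, (∑ y : β,
            dst p (fun ω => (X ω, Z ω)) (x, z) * dst p (fun ω => (Y ω, Z ω)) (y, z)
              / dst p Z z) = dst p (fun ω => (X ω, Z ω)) (x, z) := by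
          intro x
          rw [← Finset.sum_div, ← Finset.mul_sum, dst_fst_marg p Y Z z,
            mul_div_assoc, div_self (ne_of_gt h), mul_one]
        calc (∑ x : α, ∑ y : β,
            dst p (fun ω => (X ω, Z ω)) (x, z) * dst p (fun ω => (Y ω, Z ω)) (y, z)
              / dst p Z z)
            = ∑ x : α, dst p (fun ω => (X ω, Z ω)) (x, z) :=
              Finset.sum_congr rfl fun x _ => inner x
          _ = dst p Z z := dst_fst_marg p X Z z
      · simp only [if_neg h]
        simp
    have step3 : ∑ z : γ, (if 0 < dst p Z z then dst p Z z else 0) ≤ ∑ z : γ, dst p Z z := by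
      apply Finset.sum_le_sum
      intro z _
      by_cases h : 0 < dst p Z z
      · rw [if_pos h]
      · rw [if_neg h]
        exact dst_nonneg p hp Z z
    linarith
  have hsum_r : ∑ w : (α × β) × γ, dst p (fun ω => ((X ω, Y ω), Z ω)) w = ∑ z : γ, dst p Z z := by
    rw [sum_dst, sum_dst]
  have key : ∑ w : (α × β) × γ, dst p (fun ω => ((X ω, Y ω), Z ω)) w *
        (Real.logb 2 (dst p (fun ω => (X ω, Z ω)) (w.1.1, w.2)) +
         Real.logb 2 (dst p (fun ω => (Y ω, Z ω)) (w.1.2, w.2)) -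
         Real.logb 2 (dst p (fun ω => ((X ω, Y ω), Z ω)) w) -
         Real.logb 2 (dst p Z w.2)) ≤ 0 := by
    calc (∑ w : (α × β) × γ, dst p (fun ω => ((X ω, Y ω), Z ω)) w *
        (Real.logb 2 (dst p (fun ω => (X ω, Z ω)) (w.1.1, w.2)) +
         Real.logb 2 (dst p (fun ω => (Y ω, Z ω)) (w.1.2, w.2)) -
         Real.logb 2 (dst p (fun ω => ((X ω, Y ω), Z ω)) w) -
         Real.logb 2 (dst p Z w.2)))
        ≤ ∑ w : (α × β) × γ, (d w - dst p (fun ω => ((X ω, Y ω), Z ω)) w) / Real.log 2 :=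
          Finset.sum_le_sum fun w _ => hpoint w
      _ = ((∑ w : (α × β) × γ, d w) - ∑ w : (α × β) × γ,
            dst p (fun ω => ((X ω, Y ω), Z ω)) w) / Real.log 2 := by
          rw [← Finset.sum_div, Finset.sum_sub_distrib]
      _ ≤ 0 := by
          apply div_nonpos_of_nonpos_of_nonneg _ hlog2.le
          linarith
  have eXZ : ent p (fun ω => (X ω, Z ω)) =
      - ∑ w : (α × β) × γ, dst p (fun ω => ((X ω, Y ω), Z ω)) w *
        Real.logb 2 (dst p (fun ω => (X ω, Z ω)) (w.1.1, w.2)) :=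
    ent_comp p (fun ω => ((X ω, Y ω), Z ω)) (fun w => (w.1.1, w.2))
  have eYZ : ent p (fun ω => (Y ω, Z ω)) =
      - ∑ w : (α × β) × γ, dst p (fun ω => ((X ω, Y ω), Z ω)) w *
        Real.logb 2 (dst p (fun ω => (Y ω, Z ω)) (w.1.2, w.2)) :=
    ent_comp p (fun ω => ((X ω, Y ω), Z ω)) (fun w => (w.1.2, w.2))
  have eZ : ent p Z =
      - ∑ w : (α × β) × γ, dst p (fun ω => ((X ω, Y ω), Z ω)) w *
        Real.logb 2 (dst p Z w.2) :=
    ent_comp p (fun ω => ((X ω, Y ω), Z ω)) (fun w => w.2)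
  have eT : ent p (fun ω => ((X ω, Y ω), Z ω)) =
      - ∑ w : (α × β) × γ, dst p (fun ω => ((X ω, Y ω), Z ω)) w *
        Real.logb 2 (dst p (fun ω => ((X ω, Y ω), Z ω)) w) :=
    ent_eq p (fun ω => ((X ω, Y ω), Z ω))
  simp only [mul_add, mul_sub, Finset.sum_add_distrib, Finset.sum_sub_distrib] at key
  rw [eXZ, eYZ, eZ, eT]
  linarith

end RateAux

/-- For an interactive communication `F` (in particular satisfying
`H(F) ≥ H(F|X₁) + H(F|X₂)` and deterministic in `(X₁,X₂)`), with
`G₀ = g₀(X₁,X₂)` and `G₂ = g₂(G₀)`: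
`H(F) + H(G₂|X₂,F) + H(X₂|X₁,F) + H(X₁|X₂,G₀,F)
  ≥ H(G₂|X₂) + H(X₂|X₁) + H(X₁|X₂,G₀)`,
i.e., the rate expression is minimized at `F = constant`. -/

theorem rate_expression_minimized_at_constant
    {Ω 𝒳₁ 𝒳₂ 𝒢₀ 𝒢₂ ℱ : Type*} [Fintype Ω] [Fintype 𝒳₁] [DecidableEq 𝒳₁]
    [Fintype 𝒳₂] [DecidableEq 𝒳₂] [Fintype 𝒢₀] [DecidableEq 𝒢₀]
    [Fintype 𝒢₂] [DecidableEq 𝒢₂] [Fintype ℱ] [DecidableEq ℱ]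
    (p : Ω → ℝ) (hp : ∀ ω, 0 ≤ p ω) (hp1 : ∑ ω, p ω = 1)
    (X₁ : Ω → 𝒳₁) (X₂ : Ω → 𝒳₂) (G₀ : Ω → 𝒢₀) (G₂ : Ω → 𝒢₂) (F : Ω → ℱ)
    (hG₀ : ∃ g₀ : 𝒳₁ × 𝒳₂ → 𝒢₀, ∀ ω, G₀ ω = g₀ (X₁ ω, X₂ ω))
    (hG₂ : ∃ g₂ : 𝒢₀ → 𝒢₂, ∀ ω, G₂ ω = g₂ (G₀ ω))
    (hFdet : ∃ f : 𝒳₁ × 𝒳₂ → ℱ, ∀ ω, F ω = f (X₁ ω, X₂ ω))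
    (hFint : ent p F ≥ condEnt p F X₁ + condEnt p F X₂) :
    ent p F + condEnt p G₂ (fun ω => (X₂ ω, F ω)) +
      condEnt p X₂ (fun ω => (X₁ ω, F ω)) +
      condEnt p X₁ (fun ω => (X₂ ω, G₀ ω, F ω)) ≥
    condEnt p G₂ X₂ + condEnt p X₂ X₁ +
      condEnt p X₁ (fun ω => (X₂ ω, G₀ ω)) := by
  classical
  obtain ⟨g₀, hg₀⟩ := hG₀
  obtain ⟨g₂, hg₂⟩ := hG₂
  obtain ⟨f, hf⟩ := hFdet
  have hA : ent p (fun ω => (X₂ ω, (X₁ ω, F ω))) = ent p (fun ω => (X₂ ω, X₁ ω)) := by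
    apply RateAux.ent_eq_of_inj p (fun ω => (X₁ ω, X₂ ω)) _ _
      (fun a => (a.2, (a.1, f a))) (fun a => (a.2, a.1))
    · rintro ⟨a1,a2⟩ ⟨b1,b2⟩ h; simp only [Prod.mk.injEq] at h ⊢; tauto
    · rintro ⟨a1,a2⟩ ⟨b1,b2⟩ h; simp only [Prod.mk.injEq] at h ⊢; tauto
    · intro ω; simp [hf ω]
    · intro ω; simp
  have hB : ent p (fun ω => (X₁ ω, (X₂ ω, G₀ ω, F ω))) =
      ent p (fun ω => (X₁ ω, (X₂ ω, G₀ ω))) := by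
    apply RateAux.ent_eq_of_inj p (fun ω => (X₁ ω, X₂ ω)) _ _
      (fun a => (a.1, (a.2, g₀ a, f a))) (fun a => (a.1, (a.2, g₀ a)))
    · rintro ⟨a1,a2⟩ ⟨b1,b2⟩ h; simp only [Prod.mk.injEq] at h ⊢; tauto
    · rintro ⟨a1,a2⟩ ⟨b1,b2⟩ h; simp only [Prod.mk.injEq] at h ⊢; tauto
    · intro ω; simp [hf ω, hg₀ ω]
    · intro ω; simp [hg₀ ω]
  have hC : ent p (fun ω => (F ω, X₁ ω)) = ent p (fun ω => (X₁ ω, F ω)) := by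
    apply RateAux.ent_eq_of_inj p (fun ω => (X₁ ω, F ω)) _ _
      (fun a => (a.2, a.1)) id
    · rintro ⟨a1,a2⟩ ⟨b1,b2⟩ h; simp only [Prod.mk.injEq] at h ⊢; tauto
    · exact Function.injective_id
    · intro ω; simp
    · intro ω; simp
  have hD : ent p (fun ω => (F ω, X₂ ω)) = ent p (fun ω => (X₂ ω, F ω)) := by
    apply RateAux.ent_eq_of_inj p (fun ω => (X₂ ω, F ω)) _ _
      (fun a => (a.2, a.1)) id
    · rintro ⟨a1,a2⟩ ⟨b1,b2⟩ h; simp only [Prod.mk.injEq] at h ⊢; tauto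
    · exact Function.injective_id
    · intro ω; simp
    · intro ω; simp
  have hS := RateAux.submod p hp F G₀ (fun ω => (X₂ ω, G₂ ω))
  have hE : ent p (fun ω => ((F ω, G₀ ω), (X₂ ω, G₂ ω))) =
      ent p (fun ω => (X₂ ω, G₀ ω, F ω)) := by
    apply RateAux.ent_eq_of_inj p (fun ω => (X₂ ω, G₀ ω, F ω)) _ _
      (fun v => ((v.2.2, v.2.1), (v.1, g₂ v.2.1))) id
    · rintro ⟨a1,a2,a3⟩ ⟨b1,b2,b3⟩ h; simp only [Prod.mk.injEq] at h ⊢; tauto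
    · exact Function.injective_id
    · intro ω; simp [hg₂ ω]
    · intro ω; simp
  have hF : ent p (fun ω => (X₂ ω, G₂ ω)) = ent p (fun ω => (G₂ ω, X₂ ω)) := by
    apply RateAux.ent_eq_of_inj p (fun ω => (X₂ ω, G₂ ω)) _ _
      id (fun a => (a.2, a.1))
    · exact Function.injective_id
    · rintro ⟨a1,a2⟩ ⟨b1,b2⟩ h; simp only [Prod.mk.injEq] at h ⊢; tauto
    · intro ω; simp
    · intro ω; simp
  have hG' : ent p (fun ω => (F ω, (X₂ ω, G₂ ω))) =
      ent p (fun ω => (G₂ ω, (X₂ ω, F ω))) := by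
    apply RateAux.ent_eq_of_inj p (fun ω => (X₂ ω, G₂ ω, F ω)) _ _
      (fun v => (v.2.2, (v.1, v.2.1))) (fun v => (v.2.1, (v.1, v.2.2)))
    · rintro ⟨a1,a2,a3⟩ ⟨b1,b2,b3⟩ h; simp only [Prod.mk.injEq] at h ⊢; tauto
    · rintro ⟨a1,a2,a3⟩ ⟨b1,b2,b3⟩ h; simp only [Prod.mk.injEq] at h ⊢; tauto
    · intro ω; simp
    · intro ω; simp
  have hH : ent p (fun ω => (G₀ ω, (X₂ ω, G₂ ω))) =
      ent p (fun ω => (X₂ ω, G₀ ω)) := by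
    apply RateAux.ent_eq_of_inj p (fun ω => (X₂ ω, G₀ ω)) _ _
      (fun a => (a.2, (a.1, g₂ a.2))) id
    · rintro ⟨a1,a2⟩ ⟨b1,b2⟩ h; simp only [Prod.mk.injEq] at h ⊢; tauto
    · exact Function.injective_id
    · intro ω; simp [hg₂ ω]
    · intro ω; simp
  simp only [condEnt] at hFint ⊢
  linarith [hA, hB, hC, hD, hS, hE, hF, hG', hH, hFint]
end

section
/- Let X₁, X₂ be random variables, G₂ a deterministic function of (X₁,X₂), and F an interactive communication between the two terminals (satisfying H(F) ≥ H(F|X₁) + H(F|X₂)). Then H(F) + H(X₂ | X₁, F) + H(G₂ | X₂, F) ≥ H(X₂ | X₁) + H(G₂ | X₂). -/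
open Finset Real

lemma ent_congr {Ω α β : Type*} [Fintype Ω] [Fintype α] [DecidableEq α]
    [Fintype β] [DecidableEq β] (p : Ω → ℝ) (X : Ω → α) (Y : Ω → β)
    (u : α → β) (v : β → α) (hu : ∀ ω, Y ω = u (X ω)) (hv : ∀ ω, v (Y ω) = X ω) :
    ent p X = ent p Y := by
  unfold ent
  congr 1
  have h1 : ∑ a : α, (∑ ω ∈ univ.filter (fun ω => X ω = a), p ω) *
      Real.logb 2 (∑ ω ∈ univ.filter (fun ω => X ω = a), p ω)
      = ∑ a ∈ univ.image X, (∑ ω ∈ univ.filter (fun ω => X ω = a), p ω) *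
      Real.logb 2 (∑ ω ∈ univ.filter (fun ω => X ω = a), p ω) := by
    refine (Finset.sum_subset (Finset.subset_univ _) ?_).symm
    intro a _ ha
    have : univ.filter (fun ω => X ω = a) = ∅ := by
      rw [Finset.filter_eq_empty_iff]
      intro ω _ h
      exact ha (Finset.mem_image.2 ⟨ω, Finset.mem_univ _, h⟩)
    simp [this]
  have h2 : ∑ b : β, (∑ ω ∈ univ.filter (fun ω => Y ω = b), p ω) *
      Real.logb 2 (∑ ω ∈ univ.filter (fun ω => Y ω = b), p ω)
      = ∑ b ∈ univ.image Y, (∑ ω ∈ univ.filter (fun ω => Y ω = b), p ω) *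
      Real.logb 2 (∑ ω ∈ univ.filter (fun ω => Y ω = b), p ω) := by
    refine (Finset.sum_subset (Finset.subset_univ _) ?_).symm
    intro b _ hb
    have : univ.filter (fun ω => Y ω = b) = ∅ := by
      rw [Finset.filter_eq_empty_iff]
      intro ω _ h
      exact hb (Finset.mem_image.2 ⟨ω, Finset.mem_univ _, h⟩)
    simp [this]
  rw [h1, h2]
  refine Finset.sum_nbij' u v ?_ ?_ ?_ ?_ ?_
  · intro a ha
    obtain ⟨ω, _, rfl⟩ := Finset.mem_image.1 ha
    exact Finset.mem_image.2 ⟨ω, ⟨Finset.mem_univ _, hu ω⟩⟩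
  · intro b hb
    obtain ⟨ω, _, rfl⟩ := Finset.mem_image.1 hb
    exact Finset.mem_image.2 ⟨ω, ⟨Finset.mem_univ _, (hv ω).symm⟩⟩
  · intro a ha
    obtain ⟨ω, _, rfl⟩ := Finset.mem_image.1 ha
    rw [← hu ω, hv ω]
  · intro b hb
    obtain ⟨ω, _, rfl⟩ := Finset.mem_image.1 hb
    rw [hv ω, ← hu ω]
  · intro a ha
    obtain ⟨ω₀, _, rfl⟩ := Finset.mem_image.1 ha
    have hfilt : univ.filter (fun ω => Y ω = u (X ω₀)) = univ.filter (fun ω => X ω = X ω₀) := by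
      apply Finset.filter_congr
      intro ω _
      constructor
      · intro h
        have := hv ω
        rw [h] at this
        rw [← this, ← hu ω₀, hv ω₀]
      · intro h
        rw [hu ω, h]
    rw [hfilt]

lemma ent_pair_ge {Ω α β : Type*} [Fintype Ω] [Fintype α] [DecidableEq α]
    [Fintype β] [DecidableEq β] (p : Ω → ℝ) (hp : ∀ ω, 0 ≤ p ω)
    (X : Ω → α) (Y : Ω → β) :
    ent p (fun ω => (X ω, Y ω)) ≥ ent p X := by
  unfold ent
  rw [ge_iff_le, neg_le_neg_iff]
  rw [Fintype.sum_prod_type]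
  apply Finset.sum_le_sum
  intro a _
  set s : ℝ := ∑ ω ∈ univ.filter (fun ω => X ω = a), p ω with hs
  have hsum : ∑ b : β, (∑ ω ∈ univ.filter (fun ω => (X ω, Y ω) = (a, b)), p ω) = s := by
    rw [hs]
    simp only [Finset.sum_filter]
    rw [Finset.sum_comm]
    apply Finset.sum_congr rfl
    intro ω _
    rcases eq_or_ne (X ω) a with h | h
    · simp [Prod.ext_iff, h, Finset.sum_ite_eq' univ (Y ω)]
    · simp [Prod.ext_iff, h]
  have htnn : ∀ b : β, 0 ≤ ∑ ω ∈ univ.filter (fun ω => (X ω, Y ω) = (a, b)), p ω :=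
    fun b => Finset.sum_nonneg fun ω _ => hp ω
  calc ∑ b : β, (∑ ω ∈ univ.filter (fun ω => (X ω, Y ω) = (a, b)), p ω) *
        Real.logb 2 (∑ ω ∈ univ.filter (fun ω => (X ω, Y ω) = (a, b)), p ω)
      ≤ ∑ b : β, (∑ ω ∈ univ.filter (fun ω => (X ω, Y ω) = (a, b)), p ω) * Real.logb 2 s := by
        apply Finset.sum_le_sum
        intro b _
        set t : ℝ := ∑ ω ∈ univ.filter (fun ω => (X ω, Y ω) = (a, b)), p ω with ht
        rcases eq_or_lt_of_le (htnn b) with h | h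
        · have ht0 : t = 0 := ht.trans h.symm
          rw [ht0]; simp
        · apply mul_le_mul_of_nonneg_left _ (le_of_lt h)
          apply Real.logb_le_logb_of_le one_lt_two h
          rw [← hsum]
          exact Finset.single_le_sum (fun b' _ => htnn b') (Finset.mem_univ b)
    _ = s * Real.logb 2 s := by rw [← Finset.sum_mul, hsum]

/-- For `G₂ = g₂(X₁,X₂)` and an interactive communication `F = f(X₁,X₂)`
(in particular satisfying `H(F) ≥ H(F|X₁) + H(F|X₂)`),
`H(F) + H(X₂|X₁,F) + H(G₂|X₂,F) ≥ H(X₂|X₁) + H(G₂|X₂)`. -/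
theorem rate_lower_bound_interactive
    {Ω 𝒳₁ 𝒳₂ 𝒢₂ ℱ : Type*} [Fintype Ω] [Fintype 𝒳₁] [DecidableEq 𝒳₁]
    [Fintype 𝒳₂] [DecidableEq 𝒳₂] [Fintype 𝒢₂] [DecidableEq 𝒢₂]
    [Fintype ℱ] [DecidableEq ℱ]
    (p : Ω → ℝ) (hp : ∀ ω, 0 ≤ p ω) (hp1 : ∑ ω, p ω = 1)
    (X₁ : Ω → 𝒳₁) (X₂ : Ω → 𝒳₂) (G₂ : Ω → 𝒢₂) (F : Ω → ℱ)
    (hG₂ : ∃ g₂ : 𝒳₁ × 𝒳₂ → 𝒢₂, ∀ ω, G₂ ω = g₂ (X₁ ω, X₂ ω))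
    (hFdet : ∃ f : 𝒳₁ × 𝒳₂ → ℱ, ∀ ω, F ω = f (X₁ ω, X₂ ω))
    (hFint : ent p F ≥ condEnt p F X₁ + condEnt p F X₂) :
    ent p F + condEnt p X₂ (fun ω => (X₁ ω, F ω)) +
      condEnt p G₂ (fun ω => (X₂ ω, F ω)) ≥
    condEnt p X₂ X₁ + condEnt p G₂ X₂ := by
  obtain ⟨f, hf⟩ := hFdet
  have h1 : ent p (fun ω => (F ω, X₁ ω)) = ent p (fun ω => (X₁ ω, F ω)) :=
    ent_congr p _ _ Prod.swap Prod.swap (fun ω => rfl) (fun ω => rfl)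
  have h2 : ent p (fun ω => (F ω, X₂ ω)) = ent p (fun ω => (X₂ ω, F ω)) :=
    ent_congr p _ _ Prod.swap Prod.swap (fun ω => rfl) (fun ω => rfl)
  have h3 : ent p (fun ω => (X₂ ω, (X₁ ω, F ω))) = ent p (fun ω => (X₂ ω, X₁ ω)) :=
    ent_congr p _ _ (fun q => (q.1, q.2.1)) (fun q => (q.1, (q.2, f (q.2, q.1))))
      (fun ω => rfl) (fun ω => by simp [hf ω])
  have h4 : ent p (fun ω => (G₂ ω, (X₂ ω, F ω))) = ent p (fun ω => ((G₂ ω, X₂ ω), F ω)) :=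
    ent_congr p _ _ (fun q => ((q.1, q.2.1), q.2.2)) (fun q => (q.1.1, (q.1.2, q.2)))
      (fun ω => rfl) (fun ω => rfl)
  have h5 : ent p (fun ω => ((G₂ ω, X₂ ω), F ω)) ≥ ent p (fun ω => (G₂ ω, X₂ ω)) :=
    ent_pair_ge p hp (fun ω => (G₂ ω, X₂ ω)) F
  simp only [condEnt] at hFint ⊢
  linarith
end
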